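/- arXiv:2603.04768 — 3 statements merged into one kernel-verified Lean document; each statement's English description precedes it below -/
import Mathlib

section
/- Let X and Z be standard Borel measurable spaces, let μ be a probability measure on X, let κ be a Markov kernel from X to Z, and let q be a probability measure on Z. Let ν = μ.bind κ be the marginal of Z (i.e., ν(B) = ∫ κ(x)(B) dμ(x)). Assume κ(x) ≪ ν for μ-almost every x, ν ≪ q, and that all the Kullback–Leibler divergences below are finite. Then ∫ KL(κ(x) ‖ q) dμ(x) = ∫ KL(κ(x) ‖ ν) dμ(x) + KL(ν ‖ q). In particular, ∫ KL(κ(x) ‖ q) dμ(x) ≥ ∫ KL(κ(x) ‖ ν) dμ(x), so replacing the true marginal ν by any variational approximation q yields an upper bound on the expected divergence to the marginal. -/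
/-!
Since `κ x ≪ ν ≪ q`, the chain rule `d(κ x)/dq = d(κ x)/dν · dν/dq` makes the log-likelihood
ratios add, so `KL(κ x ‖ q) = KL(κ x ‖ ν) + ∫ log (dν/dq) d(κ x)`. Averaging the last term over
`μ` integrates `log (dν/dq)` against the marginal `ν`, which is `KL(ν ‖ q)`; the inequality is
then Gibbs' inequality `0 ≤ KL(ν ‖ q)`.
-/

open MeasureTheory ProbabilityTheory

/-- Kullback–Leibler divergence `∫ log (dμ/dν) dμ` (real-valued; meaningful when
`μ ≪ ν` and the integral converges). -/
noncomputable def klDiv {α : Type*} [MeasurableSpace α] (μ ν : Measure α) : ℝ :=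
  ∫ x, Real.log (μ.rnDeriv ν x).toReal ∂μ

namespace MeasureTheory.Measure

variable {α β E : Type*} {mα : MeasurableSpace α} {mβ : MeasurableSpace β}
  [NormedAddCommGroup E] [NormedSpace ℝ E] {μ : Measure α} {κ : Kernel α β} {f : β → E}

lemma integrable_integral_of_integrable_comp (hf : Integrable f (κ ∘ₘ μ)) :
    Integrable (fun x ↦ ∫ y, f y ∂κ x) μ := by
  rw [comp_eq_comp_const_apply] at hf
  simpa using hf.integral_comp

lemma integral_comp (hf : Integrable f (κ ∘ₘ μ)) :
    ∫ y, f y ∂(κ ∘ₘ μ) = ∫ x, ∫ y, f y ∂κ x ∂μ := by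
  rw [comp_eq_comp_const_apply] at hf ⊢
  simpa using Kernel.integral_comp hf

end MeasureTheory.Measure

section KL

variable {α : Type*} [MeasurableSpace α] {μ ν q : Measure α}

lemma klDiv_eq_integral_llr (μ ν : Measure α) : klDiv μ ν = ∫ x, llr μ ν x ∂μ := rfl

lemma llr_ae_eq_llr_add_llr [SigmaFinite μ] [SigmaFinite ν] [SigmaFinite q]
    (hμν : μ ≪ ν) (hνq : ν ≪ q) : llr μ q =ᵐ[μ] llr μ ν + llr ν q := by
  have hμq : μ ≪ q := hμν.trans hνq
  filter_upwards [hμq.ae_le (Measure.rnDeriv_mul_rnDeriv hμν), Measure.rnDeriv_pos hμν,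
    hμν.ae_le (Measure.rnDeriv_pos hνq), hμν.ae_le (Measure.rnDeriv_lt_top μ ν),
    hμq.ae_le (Measure.rnDeriv_lt_top ν q)] with z hmul hμν_pos hνq_pos hμν_lt hνq_lt
  simp only [Pi.add_apply, llr_def]
  rw [← hmul, Pi.mul_apply, ENNReal.toReal_mul,
    Real.log_mul (ENNReal.toReal_pos hμν_pos.ne' hμν_lt.ne).ne'
      (ENNReal.toReal_pos hνq_pos.ne' hνq_lt.ne).ne']

lemma klDiv_eq_klDiv_add_integral_llr [SigmaFinite μ] [SigmaFinite ν] [SigmaFinite q]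
    (hμν : μ ≪ ν) (hνq : ν ≪ q) (hμν_int : Integrable (llr μ ν) μ)
    (hνq_int : Integrable (llr ν q) μ) :
    klDiv μ q = klDiv μ ν + ∫ z, llr ν q z ∂μ := by
  rw [klDiv_eq_integral_llr, klDiv_eq_integral_llr, ← integral_add hμν_int hνq_int]
  exact integral_congr_ae (llr_ae_eq_llr_add_llr hμν hνq)

lemma klDiv_nonneg [IsProbabilityMeasure μ] [IsProbabilityMeasure ν] (hμν : μ ≪ ν)
    (h_int : Integrable (llr μ ν) μ) : 0 ≤ klDiv μ ν := by
  simpa [klDiv_eq_integral_llr] using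
    InformationTheory.integral_llr_add_sub_measure_univ_nonneg hμν h_int

end KL

theorem expected_klDiv_eq_expected_klDiv_marginal_add_klDiv_general
    {X Z : Type*} [MeasurableSpace X] [MeasurableSpace Z]
    (μ : Measure X) [IsProbabilityMeasure μ]
    (κ : Kernel X Z) [IsMarkovKernel κ]
    (q : Measure Z) [IsProbabilityMeasure q]
    (ν : Measure Z) (hν : ν = μ.bind κ)
    -- absolute continuity assumptions
    (hκν : ∀ᵐ x ∂μ, κ x ≪ ν) (hνq : ν ≪ q)
    -- finiteness of all Kullback–Leibler divergences involved:
    (hfin_ν : ∀ᵐ x ∂μ, Integrable (fun z => Real.log ((κ x).rnDeriv ν z).toReal) (κ x))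
    (hfin_νq : Integrable (fun z => Real.log (ν.rnDeriv q z).toReal) ν)
    (hint_ν : Integrable (fun x => klDiv (κ x) ν) μ) :
    (∫ x, klDiv (κ x) q ∂μ = ∫ x, klDiv (κ x) ν ∂μ + klDiv ν q) ∧
      (∫ x, klDiv (κ x) ν ∂μ ≤ ∫ x, klDiv (κ x) q ∂μ) := by
  subst hν
  have hllr : Integrable (llr (κ ∘ₘ μ) q) (κ ∘ₘ μ) := hfin_νq
  have hsplit : ∀ᵐ x ∂μ, klDiv (κ x) q = klDiv (κ x) (κ ∘ₘ μ) + ∫ z, llr (κ ∘ₘ μ) q z ∂κ x := by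
    filter_upwards [hκν, hfin_ν, Measure.ae_integrable_of_integrable_comp hllr]
      with x hκx hκx_int hllr_x
    exact klDiv_eq_klDiv_add_integral_llr hκx hνq hκx_int hllr_x
  have hmain : ∫ x, klDiv (κ x) q ∂μ = ∫ x, klDiv (κ x) (κ ∘ₘ μ) ∂μ + klDiv (κ ∘ₘ μ) q := by
    rw [integral_congr_ae hsplit,
      integral_add hint_ν (Measure.integrable_integral_of_integrable_comp hllr),
      klDiv_eq_integral_llr (κ ∘ₘ μ), Measure.integral_comp hllr]
  refine ⟨hmain, ?_⟩
  rw [hmain]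
  linarith [klDiv_nonneg hνq hllr]

/-- **Marginal decomposition of expected KL divergence.**
For a Markov kernel `κ` from `X` to `Z`, a probability measure `μ` on `X`,
a variational prior `q` on `Z`, and the true marginal `ν = μ.bind κ`, one has
`∫ KL(κ x ‖ q) dμ = ∫ KL(κ x ‖ ν) dμ + KL(ν ‖ q)`; in particular the left-hand
side is an upper bound on `∫ KL(κ x ‖ ν) dμ`. -/
theorem expected_klDiv_eq_expected_klDiv_marginal_add_klDiv
    {X Z : Type*} [MeasurableSpace X] [StandardBorelSpace X]
    [MeasurableSpace Z] [StandardBorelSpace Z]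
    (μ : Measure X) [IsProbabilityMeasure μ]
    (κ : Kernel X Z) [IsMarkovKernel κ]
    (q : Measure Z) [IsProbabilityMeasure q]
    (ν : Measure Z) (hν : ν = μ.bind κ)
    -- absolute continuity assumptions
    (hκν : ∀ᵐ x ∂μ, κ x ≪ ν) (hνq : ν ≪ q)
    -- finiteness of all Kullback–Leibler divergences involved:
    (hfin_q : ∀ᵐ x ∂μ, Integrable (fun z => Real.log ((κ x).rnDeriv q z).toReal) (κ x))
    (hfin_ν : ∀ᵐ x ∂μ, Integrable (fun z => Real.log ((κ x).rnDeriv ν z).toReal) (κ x))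
    (hfin_νq : Integrable (fun z => Real.log (ν.rnDeriv q z).toReal) ν)
    (hint_q : Integrable (fun x => klDiv (κ x) q) μ)
    (hint_ν : Integrable (fun x => klDiv (κ x) ν) μ) :
    (∫ x, klDiv (κ x) q ∂μ = ∫ x, klDiv (κ x) ν ∂μ + klDiv ν q) ∧
      (∫ x, klDiv (κ x) ν ∂μ ≤ ∫ x, klDiv (κ x) q ∂μ) :=
  expected_klDiv_eq_expected_klDiv_marginal_add_klDiv_general μ κ q ν hν hκν hνq hfin_ν hfin_νq
    hint_ν
end

section
/- Fix p ≥ 1, a discount factor γ ∈ [0, 1), and a reward distribution ν (a probability measure on ℝ with finite p-th moment). Define the distributional Bellman-type operator T on probability measures on ℝ with finite p-th moment by T(μ) = law of R + γG, where R ~ ν and G ~ μ are independent; equivalently, T(μ) is the convolution of ν with the pushforward of μ under x ↦ γx. Then for all probability measures μ₁, μ₂ on ℝ with finite p-th moments, W_p(T(μ₁), T(μ₂)) ≤ γ · W_p(μ₁, μ₂); that is, T is a γ-contraction in the p-Wasserstein distance. -/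
open MeasureTheory

/-- The `p`-Wasserstein distance between two measures on `ℝ`:
`W_p(μ, ν) = (inf over couplings γ of μ and ν of ∫ |x - y|^p dγ)^(1/p)`. -/
noncomputable def wassersteinDist (p : ℝ) (μ ν : Measure ℝ) : ℝ :=
  (sInf {c : ℝ | ∃ γ : Measure (ℝ × ℝ), IsProbabilityMeasure γ ∧
      γ.map Prod.fst = μ ∧ γ.map Prod.snd = ν ∧
      c = ∫ q, |q.1 - q.2| ^ p ∂γ}) ^ (1 / p)

/-- The distributional Bellman-type operator: `bellmanOp ν γ μ` is the law of
`R + γ G` where `R ~ ν` and `G ~ μ` are independent. -/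
noncomputable def bellmanOp (ν : Measure ℝ) (γ : ℝ) (μ : Measure ℝ) : Measure ℝ :=
  (ν.prod (μ.map (fun x => γ * x))).map (fun q => q.1 + q.2)

lemma measurable_cost (p : ℝ) : Measurable (fun q : ℝ × ℝ => |q.1 - q.2| ^ p) := by
  fun_prop

lemma bellmanOp_eq (ν : Measure ℝ) [IsProbabilityMeasure ν] (γ : ℝ)
    (μ : Measure ℝ) [IsProbabilityMeasure μ] :
    bellmanOp ν γ μ = (ν.prod μ).map (fun q => q.1 + γ * q.2) := by
  unfold bellmanOp
  have h1 : ν.prod (μ.map (fun x => γ * x)) = (ν.prod μ).map (Prod.map id (fun x => γ * x)) := by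
    rw [← Measure.map_prod_map _ _ measurable_id (measurable_const_mul γ), Measure.map_id]
  rw [h1, Measure.map_map (by fun_prop) (by fun_prop)]
  rfl

lemma coupling_push (p : ℝ) (γ : ℝ) (hγ0 : 0 ≤ γ)
    (ν : Measure ℝ) [IsProbabilityMeasure ν]
    (μ₁ μ₂ : Measure ℝ) [IsProbabilityMeasure μ₁] [IsProbabilityMeasure μ₂]
    (π : Measure (ℝ × ℝ)) (hπ : IsProbabilityMeasure π)
    (h1 : π.map Prod.fst = μ₁) (h2 : π.map Prod.snd = μ₂) :
    ∃ π' : Measure (ℝ × ℝ), IsProbabilityMeasure π' ∧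
      π'.map Prod.fst = bellmanOp ν γ μ₁ ∧ π'.map Prod.snd = bellmanOp ν γ μ₂ ∧
      (∫ q, |q.1 - q.2| ^ p ∂π') = γ ^ p * ∫ q, |q.1 - q.2| ^ p ∂π := by
  have hF : Measurable (fun w : ℝ × (ℝ × ℝ) => (w.1 + γ * w.2.1, w.1 + γ * w.2.2)) := by fun_prop
  refine ⟨(ν.prod π).map (fun w => (w.1 + γ * w.2.1, w.1 + γ * w.2.2)), ?_, ?_, ?_, ?_⟩
  · exact Measure.isProbabilityMeasure_map hF.aemeasurable
  · rw [Measure.map_map measurable_fst hF, bellmanOp_eq]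
    have : (ν.prod π).map (Prod.map id (Prod.fst : ℝ × ℝ → ℝ)) = ν.prod μ₁ := by
      rw [← h1, ← Measure.map_prod_map _ _ measurable_id measurable_fst, Measure.map_id]
    rw [← this, Measure.map_map (by fun_prop) (by fun_prop)]
    rfl
  · rw [Measure.map_map measurable_snd hF, bellmanOp_eq]
    have : (ν.prod π).map (Prod.map id (Prod.snd : ℝ × ℝ → ℝ)) = ν.prod μ₂ := by
      rw [← h2, ← Measure.map_prod_map _ _ measurable_id measurable_snd, Measure.map_id]
    rw [← this, Measure.map_map (by fun_prop) (by fun_prop)]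
    rfl
  · rw [integral_map hF.aemeasurable (measurable_cost p).aestronglyMeasurable]
    have heq : ∀ w : ℝ × (ℝ × ℝ),
        |(w.1 + γ * w.2.1) - (w.1 + γ * w.2.2)| ^ p = γ ^ p * |w.2.1 - w.2.2| ^ p := by
      intro w
      have : (w.1 + γ * w.2.1) - (w.1 + γ * w.2.2) = γ * (w.2.1 - w.2.2) := by ring
      rw [this, abs_mul, abs_of_nonneg hγ0, Real.mul_rpow hγ0 (abs_nonneg _)]
    simp only [heq]
    rw [integral_const_mul]
    congr 1
    have hsnd : (ν.prod π).map Prod.snd = π := by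
      rw [Measure.map_snd_prod]; simp
    rw [← hsnd, integral_map measurable_snd.aemeasurable]
    rw [hsnd]
    exact (measurable_cost p).aestronglyMeasurable

/-- **The distributional Bellman operator is a `γ`-contraction in `W_p`.** -/
theorem bellmanOp_wassersteinDist_le (p : ℝ) (hp : 1 ≤ p)
    (γ : ℝ) (hγ0 : 0 ≤ γ) (hγ1 : γ < 1)
    (ν : Measure ℝ) [IsProbabilityMeasure ν] (hν : Integrable (fun x => |x| ^ p) ν)
    (μ₁ μ₂ : Measure ℝ) [IsProbabilityMeasure μ₁] [IsProbabilityMeasure μ₂]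
    (hμ₁ : Integrable (fun x => |x| ^ p) μ₁) (hμ₂ : Integrable (fun x => |x| ^ p) μ₂) :
    wassersteinDist p (bellmanOp ν γ μ₁) (bellmanOp ν γ μ₂) ≤
      γ * wassersteinDist p μ₁ μ₂ := by
  have hp0 : p ≠ 0 := by positivity
  set S : Set ℝ := {c : ℝ | ∃ π : Measure (ℝ × ℝ), IsProbabilityMeasure π ∧
      π.map Prod.fst = μ₁ ∧ π.map Prod.snd = μ₂ ∧ c = ∫ q, |q.1 - q.2| ^ p ∂π} with hS
  set S' : Set ℝ := {c : ℝ | ∃ π : Measure (ℝ × ℝ), IsProbabilityMeasure π ∧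
      π.map Prod.fst = bellmanOp ν γ μ₁ ∧ π.map Prod.snd = bellmanOp ν γ μ₂ ∧
      c = ∫ q, |q.1 - q.2| ^ p ∂π} with hS'
  have hSne : S.Nonempty := by
    refine ⟨∫ q, |q.1 - q.2| ^ p ∂(μ₁.prod μ₂), μ₁.prod μ₂, inferInstance, ?_, ?_, rfl⟩
    · rw [Measure.map_fst_prod]; simp
    · rw [Measure.map_snd_prod]; simp
  have hS'bdd : ∀ c ∈ S', 0 ≤ c := by
    rintro c ⟨π, hπ, -, -, rfl⟩
    exact integral_nonneg fun q => Real.rpow_nonneg (abs_nonneg _) p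
  have hSbdd : ∀ c ∈ S, 0 ≤ c := by
    rintro c ⟨π, hπ, -, -, rfl⟩
    exact integral_nonneg fun q => Real.rpow_nonneg (abs_nonneg _) p
  have hmem : ∀ c ∈ S, γ ^ p * c ∈ S' := by
    rintro c ⟨π, hπ, h1, h2, rfl⟩
    obtain ⟨π', h⟩ := coupling_push p γ hγ0 ν μ₁ μ₂ π hπ h1 h2
    exact ⟨π', h.1, h.2.1, h.2.2.1, h.2.2.2.symm⟩
  have hkey : sInf S' ≤ γ ^ p * sInf S := by
    have h1 := Real.sInf_smul_of_nonneg (Real.rpow_nonneg hγ0 p) S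
    rw [smul_eq_mul] at h1
    rw [← h1]
    refine le_csInf ?_ ?_
    · obtain ⟨c, hc⟩ := hSne
      exact ⟨γ ^ p • c, Set.smul_mem_smul_set hc⟩
    · rintro b hb
      obtain ⟨c, hc, rfl⟩ := hb
      simp only [smul_eq_mul]
      exact csInf_le ⟨0, hS'bdd⟩ (hmem c hc)
  have hS'0 : 0 ≤ sInf S' := Real.sInf_nonneg hS'bdd
  have hS0 : 0 ≤ sInf S := Real.sInf_nonneg hSbdd
  calc wassersteinDist p (bellmanOp ν γ μ₁) (bellmanOp ν γ μ₂)
      = (sInf S') ^ (1 / p) := rfl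
    _ ≤ (γ ^ p * sInf S) ^ (1 / p) := by
        exact Real.rpow_le_rpow hS'0 hkey (by positivity)
    _ = γ * (sInf S) ^ (1 / p) := by
        rw [Real.mul_rpow (Real.rpow_nonneg hγ0 p) hS0, ← Real.rpow_mul hγ0,
          mul_one_div, div_self hp0, Real.rpow_one]
    _ = γ * wassersteinDist p μ₁ μ₂ := rfl
end

section
/- Fix p ≥ 1, a discount factor γ ∈ [0, 1), and a reward distribution ν (a probability measure on ℝ with finite p-th moment). Let T(μ) = law of R + γG with R ~ ν and G ~ μ independent, and suppose μ* is a fixed point of T (T(μ*) = μ*). Then for every initial probability measure μ₀ on ℝ with finite p-th moment, the iterates μ_{k+1} = T(μ_k) satisfy W_p(μ_k, μ*) ≤ γ^k · W_p(μ₀, μ*) for all k ≥ 0; in particular, μ_k converges to μ* in p-Wasserstein distance at an exponential (geometric) rate governed by γ. -/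
open MeasureTheory

/-!
Run the two chains on the same reward sample: if `(X, Y)` is a coupling of `μ` and `μ'` and
`R ~ ν` is independent of it, then `(R + γ X, R + γ Y)` couples `T μ` and `T μ'` for
`T = bellmanOp ν γ`, and since the rewards cancel in the difference its cost is `γ ^ p` times
that of `(X, Y)`. Hence `T` is a `γ`-contraction for `W_p`, and comparing the iterates with the
fixed point `μ*` gives the geometric bound.
-/

open scoped Pointwise

lemma iterate_le_pow_mul_of_isFixedPt {α : Type*} {P : α → Prop} {T : α → α}
    {d : α → α → ℝ} {γ : ℝ} (hγ : 0 ≤ γ) (hP : ∀ x, P x → P (T x))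
    (hT : ∀ x y, P x → P y → d (T x) (T y) ≤ γ * d x y)
    {x y : α} (hx : P x) (hy : P y) (hfix : Function.IsFixedPt T y) :
    ∀ k : ℕ, d (T^[k] x) y ≤ γ ^ k * d x y := by
  intro k
  induction k generalizing x with
  | zero => simp
  | succ k ih =>
    calc d (T^[k + 1] x) y = d (T^[k] (T x)) y := by rw [Function.iterate_succ_apply]
      _ ≤ γ ^ k * d (T x) (T y) := by rw [hfix.eq]; exact ih (hP x hx)
      _ ≤ γ ^ k * (γ * d x y) := by gcongr; exact hT x y hx hy
      _ = γ ^ (k + 1) * d x y := by ring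

def couplingCosts (p : ℝ) (μ ν : Measure ℝ) : Set ℝ :=
  {c : ℝ | ∃ γ : Measure (ℝ × ℝ), IsProbabilityMeasure γ ∧
      γ.map Prod.fst = μ ∧ γ.map Prod.snd = ν ∧
      c = ∫ q, |q.1 - q.2| ^ p ∂γ}

section Coupling

variable {p : ℝ} {μ ν μ' ν' : Measure ℝ}

lemma wassersteinDist_eq_sInf_couplingCosts :
    wassersteinDist p μ ν = sInf (couplingCosts p μ ν) ^ (1 / p) := rfl

lemma couplingCosts_nonneg {c : ℝ} (hc : c ∈ couplingCosts p μ ν) : 0 ≤ c := by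
  obtain ⟨π, -, -, -, rfl⟩ := hc
  exact integral_nonneg fun _ => by positivity

lemma couplingCosts_nonempty [IsProbabilityMeasure μ] [IsProbabilityMeasure ν] :
    (couplingCosts p μ ν).Nonempty :=
  ⟨_, μ.prod ν, inferInstance, by simp, by simp, rfl⟩

lemma wassersteinDist_le_mul_of_smul_subset {γ : ℝ} (hp : 0 < p) (hγ : 0 ≤ γ)
    [IsProbabilityMeasure μ] [IsProbabilityMeasure ν]
    (h : γ ^ p • couplingCosts p μ ν ⊆ couplingCosts p μ' ν') :
    wassersteinDist p μ' ν' ≤ γ * wassersteinDist p μ ν := by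
  have hγp : 0 ≤ γ ^ p := by positivity
  have hsInf : sInf (couplingCosts p μ' ν') ≤ γ ^ p * sInf (couplingCosts p μ ν) := by
    rw [← smul_eq_mul, ← Real.sInf_smul_of_nonneg hγp]
    exact csInf_le_csInf ⟨0, fun _ => couplingCosts_nonneg⟩
      couplingCosts_nonempty.smul_set h
  have hnonneg : ∀ {μ ν : Measure ℝ}, 0 ≤ sInf (couplingCosts p μ ν) :=
    Real.sInf_nonneg fun _ => couplingCosts_nonneg
  calc wassersteinDist p μ' ν' ≤ (γ ^ p * sInf (couplingCosts p μ ν)) ^ (1 / p) :=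
        Real.rpow_le_rpow hnonneg hsInf (by positivity)
    _ = γ * wassersteinDist p μ ν := by
        rw [Real.mul_rpow hγp hnonneg, ← Real.rpow_mul hγ, mul_one_div_cancel hp.ne',
          Real.rpow_one, wassersteinDist_eq_sInf_couplingCosts]

end Coupling

section Bellman

variable (ν : Measure ℝ) (γ : ℝ)

instance isProbabilityMeasure_bellmanOp [IsProbabilityMeasure ν] (μ : Measure ℝ)
    [IsProbabilityMeasure μ] : IsProbabilityMeasure (bellmanOp ν γ μ) := by
  have : IsProbabilityMeasure (μ.map (γ * ·)) :=
    Measure.isProbabilityMeasure_map (measurable_const_mul γ).aemeasurable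
  exact Measure.isProbabilityMeasure_map measurable_add.aemeasurable

lemma bellmanOp_map [SFinite ν] {α : Type*} [MeasurableSpace α] (π : Measure α) [SFinite π]
    {f : α → ℝ} (hf : Measurable f) :
    bellmanOp ν γ (π.map f) = (ν.prod π).map (fun q => q.1 + γ * f q.2) := by
  have hγf : Measurable (γ * f ·) := hf.const_mul γ
  have hprod := Measure.map_prod_map ν π measurable_id hγf
  rw [Measure.map_id] at hprod
  rw [bellmanOp, Measure.map_map (measurable_const_mul γ) hf, Function.comp_def, hprod,
    Measure.map_map measurable_add (measurable_id.prodMap hγf)]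
  rfl

noncomputable def bellmanCoupling (π : Measure (ℝ × ℝ)) : Measure (ℝ × ℝ) :=
  (ν.prod π).map fun q => (q.1 + γ * q.2.1, q.1 + γ * q.2.2)

variable (π : Measure (ℝ × ℝ))

lemma measurable_bellmanCoupling_map :
    Measurable fun q : ℝ × (ℝ × ℝ) => (q.1 + γ * q.2.1, q.1 + γ * q.2.2) := by
  fun_prop

instance isProbabilityMeasure_bellmanCoupling [IsProbabilityMeasure ν]
    [IsProbabilityMeasure π] : IsProbabilityMeasure (bellmanCoupling ν γ π) :=
  Measure.isProbabilityMeasure_map (measurable_bellmanCoupling_map γ).aemeasurable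

lemma map_fst_bellmanCoupling [SFinite ν] [SFinite π] :
    (bellmanCoupling ν γ π).map Prod.fst = bellmanOp ν γ (π.map Prod.fst) := by
  rw [bellmanCoupling, Measure.map_map measurable_fst (measurable_bellmanCoupling_map γ),
    bellmanOp_map ν γ π measurable_fst]
  rfl

lemma map_snd_bellmanCoupling [SFinite ν] [SFinite π] :
    (bellmanCoupling ν γ π).map Prod.snd = bellmanOp ν γ (π.map Prod.snd) := by
  rw [bellmanCoupling, Measure.map_map measurable_snd (measurable_bellmanCoupling_map γ),
    bellmanOp_map ν γ π measurable_snd]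
  rfl

lemma integral_bellmanCoupling_cost [IsProbabilityMeasure ν] [SFinite π] (hγ : 0 ≤ γ)
    (p : ℝ) : ∫ q, |q.1 - q.2| ^ p ∂(bellmanCoupling ν γ π) =
      γ ^ p * ∫ q, |q.1 - q.2| ^ p ∂π := by
  have hcost : Measurable fun q : ℝ × ℝ => |q.1 - q.2| ^ p := by fun_prop
  have hshift : ∀ r a b : ℝ, |(r + γ * a) - (r + γ * b)| ^ p = γ ^ p * |a - b| ^ p := by
    intro r a b
    rw [add_sub_add_left_eq_sub, ← mul_sub, abs_mul, abs_of_nonneg hγ,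
      Real.mul_rpow hγ (abs_nonneg _)]
  rw [bellmanCoupling, integral_map (measurable_bellmanCoupling_map γ).aemeasurable
    hcost.aestronglyMeasurable]
  simp only [hshift, integral_const_mul]
  simp [integral_fun_snd (f := fun q : ℝ × ℝ => |q.1 - q.2| ^ p)]

lemma smul_couplingCosts_subset_couplingCosts_bellmanOp [IsProbabilityMeasure ν] (hγ : 0 ≤ γ)
    (p : ℝ) (μ μ' : Measure ℝ) :
    γ ^ p • couplingCosts p μ μ' ⊆ couplingCosts p (bellmanOp ν γ μ) (bellmanOp ν γ μ') := by
  rintro _ ⟨_, ⟨π, hπ, rfl, rfl, rfl⟩, rfl⟩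
  exact ⟨bellmanCoupling ν γ π, inferInstance, map_fst_bellmanCoupling ν γ π,
    map_snd_bellmanCoupling ν γ π, (integral_bellmanCoupling_cost ν γ π hγ p).symm⟩

theorem wassersteinDist_bellmanOp_le [IsProbabilityMeasure ν] (hγ : 0 ≤ γ) {p : ℝ}
    (hp : 0 < p) (μ μ' : Measure ℝ) [IsProbabilityMeasure μ] [IsProbabilityMeasure μ'] :
    wassersteinDist p (bellmanOp ν γ μ) (bellmanOp ν γ μ') ≤ γ * wassersteinDist p μ μ' :=
  wassersteinDist_le_mul_of_smul_subset hp hγ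
    (smul_couplingCosts_subset_couplingCosts_bellmanOp ν γ hγ p μ μ')

end Bellman

theorem bellmanOp_iterate_wassersteinDist_le_general (p : ℝ) (hp : 1 ≤ p)
    (γ : ℝ) (hγ0 : 0 ≤ γ)
    (ν : Measure ℝ) [IsProbabilityMeasure ν]
    (μstar : Measure ℝ) [IsProbabilityMeasure μstar]
    (hfix : bellmanOp ν γ μstar = μstar)
    (μ₀ : Measure ℝ) [IsProbabilityMeasure μ₀] :
    ∀ k : ℕ, wassersteinDist p ((bellmanOp ν γ)^[k] μ₀) μstar ≤
      γ ^ k * wassersteinDist p μ₀ μstar :=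
  iterate_le_pow_mul_of_isFixedPt (P := IsProbabilityMeasure) hγ0 (fun _ _ => inferInstance)
    (fun μ μ' _ _ => wassersteinDist_bellmanOp_le ν γ hγ0 (by linarith) μ μ')
    ‹_› ‹_› hfix

/-- **Exponential convergence of distributional Bellman iterates.** If `μ*` is a
fixed point of the Bellman operator, then the iterates `μ_{k+1} = T(μ_k)` satisfy
`W_p(μ_k, μ*) ≤ γ^k ⬝ W_p(μ₀, μ*)` for all `k ≥ 0`. -/
theorem bellmanOp_iterate_wassersteinDist_le (p : ℝ) (hp : 1 ≤ p)
    (γ : ℝ) (hγ0 : 0 ≤ γ) (hγ1 : γ < 1)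
    (ν : Measure ℝ) [IsProbabilityMeasure ν] (hν : Integrable (fun x => |x| ^ p) ν)
    (μstar : Measure ℝ) [IsProbabilityMeasure μstar]
    (hμstar : Integrable (fun x => |x| ^ p) μstar)
    (hfix : bellmanOp ν γ μstar = μstar)
    (μ₀ : Measure ℝ) [IsProbabilityMeasure μ₀]
    (hμ₀ : Integrable (fun x => |x| ^ p) μ₀) :
    ∀ k : ℕ, wassersteinDist p ((bellmanOp ν γ)^[k] μ₀) μstar ≤
      γ ^ k * wassersteinDist p μ₀ μstar :=
  bellmanOp_iterate_wassersteinDist_le_general p hp γ hγ0 ν μstar hfix μ₀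
end
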